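/- arXiv:1004.4038 — 4 statements merged into one kernel-verified Lean document; each statement's English description precedes it below -/
import Mathlib

section
/- For all nonnegative integers n and positive integers w₁, w₂ such that ξ^{d w₁} ≠ 1 and ξ^{d w₂} ≠ 1: Σ_{k=0}^{n} C(n,k) B_{k,χ,ξ^{w₁}}(w₂ y₁) B_{n−k,χ,ξ^{w₂}}(w₁ y₂) w₁^k w₂^{n−k} = Σ_{k=0}^{n} C(n,k) B_{k,χ,ξ^{w₂}}(w₁ y₁) B_{n−k,χ,ξ^{w₁}}(w₂ y₂) w₂^k w₁^{n−k}, for all y₁, y₂ ∈ ℂ. -/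
open PowerSeries Finset

/-- `Σ_{a=0}^{d-1} χ(a) ζ^a e^{at}` as a formal power series in `ℂ⟦t⟧`. -/
noncomputable def twistSum (d : ℕ) (χ : DirichletCharacter ℂ d) (ζ : ℂ) : PowerSeries ℂ :=
  ∑ a ∈ Finset.range d,
    PowerSeries.C (χ (a : ZMod d) * ζ ^ a) * PowerSeries.rescale (a : ℂ) (PowerSeries.exp ℂ)

/-- Generalized twisted Bernoulli polynomial `B_{n,χ,ζ}(x)`, defined by
`(t e^{xt}/(ζ^d e^{dt} − 1)) Σ_{a=0}^{d−1} χ(a) ζ^a e^{at} = Σ_n B_{n,χ,ζ}(x) tⁿ/n!`. -/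
noncomputable def genBern (d : ℕ) (χ : DirichletCharacter ℂ d) (ζ : ℂ) (n : ℕ) (x : ℂ) : ℂ :=
  (n.factorial : ℂ) * PowerSeries.coeff n
    (PowerSeries.X * PowerSeries.rescale x (PowerSeries.exp ℂ) * twistSum d χ ζ *
      (PowerSeries.C (ζ ^ d) * PowerSeries.rescale (d : ℂ) (PowerSeries.exp ℂ) - 1)⁻¹)

/-- Generalized twisted power sum `S_k(m; χ, ζ) = Σ_{a=0}^{m} χ(a) ζ^a a^k` (with `0^0 = 1`). -/
noncomputable def genPowSum (d : ℕ) (χ : DirichletCharacter ℂ d) (ζ : ℂ) (k m : ℕ) : ℂ :=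
  ∑ a ∈ Finset.range (m + 1), χ (a : ZMod d) * ζ ^ a * (a : ℂ) ^ k

/-- The generating power series of the generalized twisted Bernoulli polynomials. -/
noncomputable def bser (d : ℕ) (χ : DirichletCharacter ℂ d) (ζ : ℂ) (x : ℂ) : PowerSeries ℂ :=
  PowerSeries.X * PowerSeries.rescale x (PowerSeries.exp ℂ) * twistSum d χ ζ *
      (PowerSeries.C (ζ ^ d) * PowerSeries.rescale (d : ℂ) (PowerSeries.exp ℂ) - 1)⁻¹

lemma genBern_eq (d : ℕ) (χ : DirichletCharacter ℂ d) (ζ : ℂ) (n : ℕ) (x : ℂ) :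
    genBern d χ ζ n x = (n.factorial : ℂ) * PowerSeries.coeff n (bser d χ ζ x) := rfl

lemma rescale_C_app (a c : ℂ) :
    PowerSeries.rescale a (PowerSeries.C c) = PowerSeries.C c := by
  ext n
  simp only [PowerSeries.coeff_rescale, PowerSeries.coeff_C]
  split_ifs with hn
  · subst hn; simp
  · simp

lemma rescale_inv (a : ℂ) (U : PowerSeries ℂ) (h : PowerSeries.constantCoeff U ≠ 0) :
    PowerSeries.rescale a (U⁻¹) = (PowerSeries.rescale a U)⁻¹ := by
  have h2 : PowerSeries.constantCoeff (PowerSeries.rescale a U) ≠ 0 := by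
    rw [← PowerSeries.coeff_zero_eq_constantCoeff_apply, PowerSeries.coeff_rescale]
    simpa using h
  rw [PowerSeries.eq_inv_iff_mul_eq_one h2, ← map_mul,
    PowerSeries.inv_mul_cancel U h, map_one]

/-- The binomial convolution sum equals `n!` times a coefficient of a product. -/
lemma conv_sum (d : ℕ) (χ : DirichletCharacter ℂ d) (ζ₁ ζ₂ x₁ x₂ : ℂ) (w₁ w₂ : ℕ) (n : ℕ) :
    ∑ k ∈ Finset.range (n + 1), (n.choose k : ℂ) *
        genBern d χ ζ₁ k x₁ * genBern d χ ζ₂ (n - k) x₂ * (w₁ : ℂ) ^ k * (w₂ : ℂ) ^ (n - k)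
      = (n.factorial : ℂ) * PowerSeries.coeff n
          (PowerSeries.rescale (w₁ : ℂ) (bser d χ ζ₁ x₁) *
            PowerSeries.rescale (w₂ : ℂ) (bser d χ ζ₂ x₂)) := by
  rw [PowerSeries.coeff_mul, Finset.Nat.sum_antidiagonal_eq_sum_range_succ_mk,
    Finset.mul_sum]
  refine Finset.sum_congr rfl fun k hk => ?_
  have hk' : k ≤ n := Nat.lt_succ_iff.mp (Finset.mem_range.mp hk)
  have hfac : ((n.choose k : ℂ)) * (k.factorial : ℂ) * ((n - k).factorial : ℂ)
      = (n.factorial : ℂ) := by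
    rw [← Nat.cast_mul, ← Nat.cast_mul, Nat.choose_mul_factorial_mul_factorial hk']
  simp only [PowerSeries.coeff_rescale, genBern_eq]
  ring_nf
  ring_nf at hfac
  linear_combination ((w₁ : ℂ) ^ k * (w₂ : ℂ) ^ (n - k) *
    PowerSeries.coeff k (bser d χ ζ₁ x₁) * PowerSeries.coeff (n - k) (bser d χ ζ₂ x₂)) * hfac

/-- Rescaling the Bernoulli generating series. -/
lemma rescale_bser (d : ℕ) (χ : DirichletCharacter ℂ d) (ξ : ℂ) (w : ℕ)
    (h : ξ ^ (d * w) ≠ 1) (x : ℂ) :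
    PowerSeries.rescale (w : ℂ) (bser d χ (ξ ^ w) x)
      = (PowerSeries.C (w : ℂ) * PowerSeries.X) *
          PowerSeries.rescale (x * (w : ℂ)) (PowerSeries.exp ℂ) *
          PowerSeries.rescale (w : ℂ) (twistSum d χ (ξ ^ w)) *
          (PowerSeries.C (ξ ^ (d * w)) *
            PowerSeries.rescale ((d : ℂ) * (w : ℂ)) (PowerSeries.exp ℂ) - 1)⁻¹ := by
  have hζd : (ξ ^ w) ^ d = ξ ^ (d * w) := by rw [← pow_mul, mul_comm]
  have hcc : PowerSeries.constantCoeff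
      (PowerSeries.C ((ξ ^ w) ^ d) *
        PowerSeries.rescale (d : ℂ) (PowerSeries.exp ℂ) - 1) ≠ 0 := by
    have he : PowerSeries.constantCoeff
        (PowerSeries.rescale (d : ℂ) (PowerSeries.exp ℂ)) = 1 := by
      rw [← PowerSeries.coeff_zero_eq_constantCoeff_apply, PowerSeries.coeff_rescale]
      simp [PowerSeries.exp]
    simp [hζd, sub_eq_zero, h, he]
  unfold bser
  rw [map_mul, map_mul, map_mul, rescale_inv _ _ hcc, map_sub, map_mul, map_one,
    rescale_C_app, PowerSeries.rescale_X, PowerSeries.rescale_rescale,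
    PowerSeries.rescale_rescale, hζd]

lemma swap4 {R : Type*} [CommRing R] (a b c d e f g h : R) :
    (a * b * c * d) * (e * f * g * h) = (e * b * g * h) * (a * f * c * d) := by ring

/-- Theorem 1 (two-variable symmetry for generalized twisted Bernoulli polynomials). -/
theorem stmt1 (d : ℕ) (hd : 0 < d) (χ : DirichletCharacter ℂ d) (hχ : χ.IsPrimitive)
    (ξ : ℂ) (hroot : ∃ m : ℕ, 0 < m ∧ ξ ^ m = 1)
    (n : ℕ) (w₁ w₂ : ℕ) (hw₁ : 0 < w₁) (hw₂ : 0 < w₂)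
    (h₁ : ξ ^ (d * w₁) ≠ 1) (h₂ : ξ ^ (d * w₂) ≠ 1) (y₁ y₂ : ℂ) :
    ∑ k ∈ Finset.range (n + 1), (n.choose k : ℂ) *
        genBern d χ (ξ ^ w₁) k (w₂ * y₁) * genBern d χ (ξ ^ w₂) (n - k) (w₁ * y₂) *
        (w₁ : ℂ) ^ k * (w₂ : ℂ) ^ (n - k)
      = ∑ k ∈ Finset.range (n + 1), (n.choose k : ℂ) *
          genBern d χ (ξ ^ w₂) k (w₁ * y₁) * genBern d χ (ξ ^ w₁) (n - k) (w₂ * y₂) *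
          (w₂ : ℂ) ^ k * (w₁ : ℂ) ^ (n - k) := by
  rw [conv_sum, conv_sum, rescale_bser d χ ξ w₁ h₁, rescale_bser d χ ξ w₂ h₂,
    rescale_bser d χ ξ w₂ h₂, rescale_bser d χ ξ w₁ h₁]
  rw [show (w₂ : ℂ) * y₁ * (w₁ : ℂ) = (w₁ : ℂ) * y₁ * (w₂ : ℂ) by ring,
    show (w₁ : ℂ) * y₂ * (w₂ : ℂ) = (w₂ : ℂ) * y₂ * (w₁ : ℂ) by ring]
  exact congrArg (fun z => (n.factorial : ℂ) * PowerSeries.coeff n z)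
    (swap4 _ _ _ _ _ _ _ _)
end

section
/- For all nonnegative integers n, all y₁, y₂, y₃ ∈ ℂ, and positive integers w₁, w₂, w₃ with ξ^{d w₂ w₃} ≠ 1, ξ^{d w₁ w₃} ≠ 1, ξ^{d w₁ w₂} ≠ 1, the multinomial sum Σ_{k+l+m=n} (n!/(k! l! m!)) B_{k,χ,ξ^{w₂w₃}}(w₁ y₁) B_{l,χ,ξ^{w₁w₃}}(w₂ y₂) B_{m,χ,ξ^{w₁w₂}}(w₃ y₃) w₁^{l+m} w₂^{k+m} w₃^{k+l} is invariant under all six permutations σ of (w₁,y₁),(w₂,y₂),(w₃,y₃): that is, it equals the same expression with (w₁,w₂,w₃) and (y₁,y₂,y₃) simultaneously permuted by σ (with the twist exponents w_i w_j permuted accordingly). -/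
open PowerSeries Finset

/-- The expression of Theorem 4 (type Λ₂₃⁰): a triple multinomial sum of three
generalized twisted Bernoulli polynomials. -/
noncomputable def expr4 (d : ℕ) (χ : DirichletCharacter ℂ d) (ξ : ℂ) (n : ℕ)
    (w : Fin 3 → ℕ) (y : Fin 3 → ℂ) : ℂ :=
  ∑ k ∈ Finset.range (n + 1), ∑ l ∈ Finset.range (n + 1 - k),
    (n.factorial : ℂ) / ((k.factorial : ℂ) * (l.factorial : ℂ) * ((n - k - l).factorial : ℂ)) *
      genBern d χ (ξ ^ (w 1 * w 2)) k ((w 0 : ℂ) * y 0) *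
      genBern d χ (ξ ^ (w 0 * w 2)) l ((w 1 : ℂ) * y 1) *
      genBern d χ (ξ ^ (w 0 * w 1)) (n - k - l) ((w 2 : ℂ) * y 2) *
      (w 0 : ℂ) ^ (l + (n - k - l)) * (w 1 : ℂ) ^ (k + (n - k - l)) * (w 2 : ℂ) ^ (k + l)

lemma tri_eq (n : ℕ) (f : ℕ → ℕ → ℂ) :
    ∑ k ∈ Finset.range (n+1), ∑ l ∈ Finset.range (n+1-k), f k l
      = ∑ p ∈ (Finset.range (n+1) ×ˢ Finset.range (n+1)).filter (fun p => p.1 + p.2 ≤ n),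
          f p.1 p.2 := by
  rw [Finset.sum_filter, Finset.sum_product]
  refine Finset.sum_congr rfl fun k hk => ?_
  rw [← Finset.sum_filter]
  refine Finset.sum_congr ?_ fun _ _ => rfl
  ext l
  simp only [Finset.mem_filter, Finset.mem_range] at *
  omega

lemma tri_comm (n : ℕ) (f : ℕ → ℕ → ℂ) :
    ∑ k ∈ Finset.range (n+1), ∑ l ∈ Finset.range (n+1-k), f k l
      = ∑ k ∈ Finset.range (n+1), ∑ l ∈ Finset.range (n+1-k), f l k := by
  rw [tri_eq, tri_eq]
  refine Finset.sum_nbij' (fun p => p.swap) (fun p => p.swap) ?_ ?_ ?_ ?_ ?_ <;>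
    simp +contextual [Finset.mem_filter, Nat.add_comm]

lemma expr4_swap01 (d : ℕ) (χ : DirichletCharacter ℂ d) (ξ : ℂ) (n : ℕ)
    (w : Fin 3 → ℕ) (y : Fin 3 → ℂ) :
    expr4 d χ ξ n (w ∘ Equiv.swap 0 1) (y ∘ Equiv.swap 0 1) = expr4 d χ ξ n w y := by
  unfold expr4
  rw [tri_comm]
  refine Finset.sum_congr rfl fun k hk => Finset.sum_congr rfl fun l hl => ?_
  have h0 : Equiv.swap (0 : Fin 3) 1 0 = 1 := by decide
  have h1 : Equiv.swap (0 : Fin 3) 1 1 = 0 := by decide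
  have h2 : Equiv.swap (0 : Fin 3) 1 2 = 2 := by decide
  simp only [Function.comp_apply, h0, h1, h2]
  rw [show n - k - l = n - l - k by omega, show w 1 * w 0 = w 0 * w 1 from Nat.mul_comm _ _,
    show k + l = l + k from Nat.add_comm _ _]
  ring

lemma expr4_swap12 (d : ℕ) (χ : DirichletCharacter ℂ d) (ξ : ℂ) (n : ℕ)
    (w : Fin 3 → ℕ) (y : Fin 3 → ℂ) :
    expr4 d χ ξ n (w ∘ Equiv.swap 1 2) (y ∘ Equiv.swap 1 2) = expr4 d χ ξ n w y := by
  unfold expr4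
  refine Finset.sum_congr rfl fun k hk => ?_
  have hk' : k ≤ n := by simpa using Nat.lt_succ_iff.mp (Finset.mem_range.mp hk)
  rw [show n + 1 - k = (n - k) + 1 by omega, ← Finset.sum_range_reflect]
  refine Finset.sum_congr rfl fun l hl => ?_
  have hl' : l ≤ n - k := Nat.lt_succ_iff.mp (Finset.mem_range.mp hl)
  have h0 : Equiv.swap (1 : Fin 3) 2 0 = 0 := by decide
  have h1 : Equiv.swap (1 : Fin 3) 2 1 = 2 := by decide
  have h2 : Equiv.swap (1 : Fin 3) 2 2 = 1 := by decide
  simp only [Function.comp_apply, h0, h1, h2, Nat.add_sub_cancel]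
  rw [show n - k - (n - k - l) = l by omega, show w 2 * w 1 = w 1 * w 2 from Nat.mul_comm _ _]
  rw [show n - k - l + l = l + (n - k - l) by omega]
  ring

lemma expr4_swap02 (d : ℕ) (χ : DirichletCharacter ℂ d) (ξ : ℂ) (n : ℕ)
    (w : Fin 3 → ℕ) (y : Fin 3 → ℂ) :
    expr4 d χ ξ n (w ∘ Equiv.swap 0 2) (y ∘ Equiv.swap 0 2) = expr4 d χ ξ n w y := by
  have hs : Equiv.swap (0 : Fin 3) 2 = Equiv.swap 0 1 * Equiv.swap 1 2 * Equiv.swap 0 1 := by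
    ext i; fin_cases i <;> decide
  rw [hs]
  simp only [Equiv.Perm.coe_mul, ← Function.comp_assoc]
  rw [expr4_swap01, expr4_swap12, expr4_swap01]

lemma expr4_swap_any (d : ℕ) (χ : DirichletCharacter ℂ d) (ξ : ℂ) (n : ℕ)
    (x z : Fin 3) (w : Fin 3 → ℕ) (y : Fin 3 → ℂ) :
    expr4 d χ ξ n (w ∘ Equiv.swap x z) (y ∘ Equiv.swap x z) = expr4 d χ ξ n w y := by
  have sw : ∀ a : Fin 3, Equiv.swap a a = Equiv.refl (Fin 3) := fun a => Equiv.swap_self a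
  match x, z with
  | 0, 0 => rw [sw]; rfl
  | 1, 1 => rw [sw]; rfl
  | 2, 2 => rw [sw]; rfl
  | 0, 1 => exact expr4_swap01 d χ ξ n w y
  | 1, 0 => rw [Equiv.swap_comm]; exact expr4_swap01 d χ ξ n w y
  | 1, 2 => exact expr4_swap12 d χ ξ n w y
  | 2, 1 => rw [Equiv.swap_comm]; exact expr4_swap12 d χ ξ n w y
  | 0, 2 => exact expr4_swap02 d χ ξ n w y
  | 2, 0 => rw [Equiv.swap_comm]; exact expr4_swap02 d χ ξ n w y

lemma expr4_perm (d : ℕ) (χ : DirichletCharacter ℂ d) (ξ : ℂ) (n : ℕ)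
    (σ : Equiv.Perm (Fin 3)) :
    ∀ (w : Fin 3 → ℕ) (y : Fin 3 → ℂ),
      expr4 d χ ξ n (w ∘ σ) (y ∘ σ) = expr4 d χ ξ n w y := by
  refine Equiv.Perm.swap_induction_on σ (fun w y => by simp) ?_
  intro f x z hxz ih w y
  simp only [Equiv.Perm.coe_mul, ← Function.comp_assoc]
  rw [ih, expr4_swap_any]

/-- Theorem 4: the multinomial sum is invariant under all six simultaneous
permutations of `(w₁,y₁), (w₂,y₂), (w₃,y₃)`. -/
theorem stmt4 (d : ℕ) (hd : 0 < d) (χ : DirichletCharacter ℂ d) (hχ : χ.IsPrimitive)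
    (ξ : ℂ) (hroot : ∃ m : ℕ, 0 < m ∧ ξ ^ m = 1)
    (n : ℕ) (w : Fin 3 → ℕ) (hw : ∀ i, 0 < w i)
    (h : ∀ i j : Fin 3, i ≠ j → ξ ^ (d * (w i * w j)) ≠ 1)
    (y : Fin 3 → ℂ) (σ : Equiv.Perm (Fin 3)) :
    expr4 d χ ξ n (w ∘ σ) (y ∘ σ) = expr4 d χ ξ n w y :=
  expr4_perm d χ ξ n σ w y
end

section
/- For all nonnegative integers n and positive integers w₁, w₂, w₃ with ξ^{d w₂ w₃} ≠ 1, ξ^{d w₁ w₃} ≠ 1, ξ^{d w₁ w₂} ≠ 1 (and ξ^{d w_i} ≠ 1 for each i): Σ_{k+l+m=n} (n!/(k! l! m!)) S_k(d w₁ − 1; χ, ξ^{w₃}) S_l(d w₂ − 1; χ, ξ^{w₁}) S_m(d w₃ − 1; χ, ξ^{w₂}) w₃^k w₁^l w₂^m = Σ_{k+l+m=n} (n!/(k! l! m!)) S_k(d w₁ − 1; χ, ξ^{w₂}) S_l(d w₃ − 1; χ, ξ^{w₁}) S_m(d w₂ − 1; χ, ξ^{w₃}) w₂^k w₁^l w₃^m.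 -/
open PowerSeries Finset

/-- `Σ_{a=0}^{M-1} χ(a) ξ^{ua} e^{uat}`. -/
noncomputable def fser (d : ℕ) (χ : DirichletCharacter ℂ d) (ξ : ℂ) (u M : ℕ) :
    PowerSeries ℂ :=
  ∑ a ∈ Finset.range M,
    PowerSeries.C (χ (a : ZMod d) * ξ ^ (u * a)) *
      PowerSeries.rescale ((u * a : ℕ) : ℂ) (PowerSeries.exp ℂ)

lemma pow_CE (c x : ℂ) (i : ℕ) :
    (PowerSeries.C c * PowerSeries.rescale x (PowerSeries.exp ℂ)) ^ i
      = PowerSeries.C (c ^ i) * PowerSeries.rescale ((i : ℂ) * x) (PowerSeries.exp ℂ) := by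
  induction i with
  | zero => simp [PowerSeries.rescale_zero]
  | succ i ih =>
      rw [pow_succ, ih, mul_mul_mul_comm, PowerSeries.exp_mul_exp_eq_exp_add, ← map_mul,
        ← pow_succ]
      push_cast
      ring_nf

lemma fser_split (d : ℕ) (hd : 0 < d) (χ : DirichletCharacter ℂ d) (ξ : ℂ) (u w : ℕ) :
    fser d χ ξ u (d * w)
      = fser d χ ξ u d *
        ∑ i ∈ Finset.range w,
          (PowerSeries.C (ξ ^ (u * d)) *
              PowerSeries.rescale ((u * d : ℕ) : ℂ) (PowerSeries.exp ℂ)) ^ i := by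
  trans (∑ a ∈ Finset.range d, ∑ i ∈ Finset.range w,
        PowerSeries.C (χ ((a + d * i : ℕ) : ZMod d) * ξ ^ (u * (a + d * i))) *
          PowerSeries.rescale ((u * (a + d * i) : ℕ) : ℂ) (PowerSeries.exp ℂ))
  case _ =>
    rw [fser, ← Finset.sum_product']
    refine Finset.sum_nbij' (fun b => (b % d, b / d)) (fun p => p.1 + d * p.2) ?_ ?_ ?_ ?_ ?_
    · intro b hb
      simp only [Finset.mem_range, Finset.mem_product] at *
      constructor
      · exact Nat.mod_lt _ hd
      · exact Nat.div_lt_of_lt_mul hb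
    · intro p hp
      simp only [Finset.mem_range, Finset.mem_product] at *
      have := hp.1; have := hp.2
      calc p.1 + d * p.2 < d + d * p.2 := by omega
        _ ≤ d * w := by nlinarith
    · intro b hb; simp [Nat.mod_add_div]
    · intro p hp
      simp only [Finset.mem_range, Finset.mem_product] at hp
      ext <;> simp [Nat.add_mul_mod_self_left, Nat.mod_eq_of_lt hp.1,
        Nat.add_mul_div_left _ _ hd, Nat.div_eq_of_lt hp.1]
    · intro b hb; rw [Nat.mod_add_div]
  rw [fser, Finset.sum_mul_sum]
  · refine Finset.sum_congr rfl fun a _ => Finset.sum_congr rfl fun i _ => ?_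
    rw [pow_CE, mul_mul_mul_comm, PowerSeries.exp_mul_exp_eq_exp_add, ← map_mul]
    congr 2
    · have hχ : ((a + d * i : ℕ) : ZMod d) = (a : ZMod d) := by push_cast; simp
      rw [hχ, (pow_mul ξ (u * d) i).symm, mul_assoc, ← pow_add]
      congr 1
      ring
    · push_cast
      ring

lemma Xpow_symm (d : ℕ) (ξ : ℂ) (u w : ℕ) :
    (PowerSeries.C (ξ ^ (u * d)) *
        PowerSeries.rescale ((u * d : ℕ) : ℂ) (PowerSeries.exp ℂ)) ^ w
      = (PowerSeries.C (ξ ^ (w * d)) *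
          PowerSeries.rescale ((w * d : ℕ) : ℂ) (PowerSeries.exp ℂ)) ^ u := by
  rw [pow_CE, pow_CE]
  congr 2
  · rw [← pow_mul, ← pow_mul]; ring_nf
  · push_cast; ring

lemma constCoeff_X_sub_one (d : ℕ) (ξ : ℂ) (u : ℕ) (h : ξ ^ (d * u) ≠ 1) :
    (PowerSeries.C (ξ ^ (u * d)) *
        PowerSeries.rescale ((u * d : ℕ) : ℂ) (PowerSeries.exp ℂ)) - 1 ≠ 0 := by
  intro hz
  apply h
  have hr : PowerSeries.constantCoeff
      (PowerSeries.rescale ((u * d : ℕ) : ℂ) (PowerSeries.exp ℂ)) = 1 := by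
    rw [← PowerSeries.coeff_zero_eq_constantCoeff_apply, PowerSeries.coeff_rescale,
      PowerSeries.coeff_exp]
    simp
  have h0 := congrArg (PowerSeries.constantCoeff) hz
  rw [map_sub, map_mul, PowerSeries.constantCoeff_C, hr, mul_one, map_one, map_zero,
    sub_eq_zero] at h0
  rwa [mul_comm d u]

lemma key_prod (d : ℕ) (hd : 0 < d) (χ : DirichletCharacter ℂ d) (ξ : ℂ)
    (w₁ w₂ w₃ : ℕ)
    (h₁ : ξ ^ (d * w₁) ≠ 1) (h₂ : ξ ^ (d * w₂) ≠ 1) (h₃ : ξ ^ (d * w₃) ≠ 1) :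
    fser d χ ξ w₃ (d * w₁) * fser d χ ξ w₁ (d * w₂) * fser d χ ξ w₂ (d * w₃)
      = fser d χ ξ w₂ (d * w₁) * fser d χ ξ w₁ (d * w₃) * fser d χ ξ w₃ (d * w₂) := by
  set X : ℕ → PowerSeries ℂ := fun u =>
    PowerSeries.C (ξ ^ (u * d)) * PowerSeries.rescale ((u * d : ℕ) : ℂ) (PowerSeries.exp ℂ)
    with hX
  have hG : ∀ u w : ℕ, (∑ i ∈ Finset.range w, X u ^ i) * (X u - 1) = X u ^ w - 1 :=
    fun u w => geom_sum_mul (X u) w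
  have hgeo : (∑ i ∈ Finset.range w₁, X w₃ ^ i) * (∑ i ∈ Finset.range w₂, X w₁ ^ i) *
        (∑ i ∈ Finset.range w₃, X w₂ ^ i)
      = (∑ i ∈ Finset.range w₁, X w₂ ^ i) * (∑ i ∈ Finset.range w₃, X w₁ ^ i) *
        (∑ i ∈ Finset.range w₂, X w₃ ^ i) := by
    have hc : (X w₁ - 1) * (X w₂ - 1) * (X w₃ - 1) ≠ 0 :=
      mul_ne_zero (mul_ne_zero (constCoeff_X_sub_one d ξ w₁ h₁)
        (constCoeff_X_sub_one d ξ w₂ h₂)) (constCoeff_X_sub_one d ξ w₃ h₃)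
    apply mul_right_cancel₀ hc
    calc (∑ i ∈ Finset.range w₁, X w₃ ^ i) * (∑ i ∈ Finset.range w₂, X w₁ ^ i) *
          (∑ i ∈ Finset.range w₃, X w₂ ^ i) * ((X w₁ - 1) * (X w₂ - 1) * (X w₃ - 1))
        = ((∑ i ∈ Finset.range w₁, X w₃ ^ i) * (X w₃ - 1)) *
          ((∑ i ∈ Finset.range w₂, X w₁ ^ i) * (X w₁ - 1)) *
          ((∑ i ∈ Finset.range w₃, X w₂ ^ i) * (X w₂ - 1)) := by ring
      _ = (X w₃ ^ w₁ - 1) * (X w₁ ^ w₂ - 1) * (X w₂ ^ w₃ - 1) := by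
          rw [hG, hG, hG]
      _ = (X w₂ ^ w₁ - 1) * (X w₁ ^ w₃ - 1) * (X w₃ ^ w₂ - 1) := by
          rw [show X w₂ ^ w₁ = X w₁ ^ w₂ from Xpow_symm d ξ w₂ w₁,
            show X w₁ ^ w₃ = X w₃ ^ w₁ from Xpow_symm d ξ w₁ w₃,
            show X w₃ ^ w₂ = X w₂ ^ w₃ from Xpow_symm d ξ w₃ w₂]
          ring
      _ = ((∑ i ∈ Finset.range w₁, X w₂ ^ i) * (X w₂ - 1)) *
          ((∑ i ∈ Finset.range w₃, X w₁ ^ i) * (X w₁ - 1)) *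
          ((∑ i ∈ Finset.range w₂, X w₃ ^ i) * (X w₃ - 1)) := by rw [hG, hG, hG]
      _ = _ := by ring
  rw [fser_split d hd χ ξ w₃ w₁, fser_split d hd χ ξ w₁ w₂, fser_split d hd χ ξ w₂ w₃,
    fser_split d hd χ ξ w₂ w₁, fser_split d hd χ ξ w₁ w₃, fser_split d hd χ ξ w₃ w₂]
  rw [← hX] at *
  linear_combination (fser d χ ξ w₃ d * fser d χ ξ w₁ d * fser d χ ξ w₂ d) * hgeo

lemma coeff_mul3 (A B C : PowerSeries ℂ) (n : ℕ) :
    PowerSeries.coeff n (A * B * C)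
      = ∑ k ∈ Finset.range (n + 1), ∑ l ∈ Finset.range (n + 1 - k),
          PowerSeries.coeff k A * PowerSeries.coeff l B *
            PowerSeries.coeff (n - k - l) C := by
  rw [mul_assoc, PowerSeries.coeff_mul, Finset.Nat.sum_antidiagonal_eq_sum_range_succ_mk]
  refine Finset.sum_congr rfl fun k hk => ?_
  have hk' : k ≤ n := Nat.lt_succ_iff.mp (Finset.mem_range.mp hk)
  rw [PowerSeries.coeff_mul, Finset.Nat.sum_antidiagonal_eq_sum_range_succ_mk, Finset.mul_sum,
    show ((k, n - k).2).succ = n + 1 - k from by simp; omega]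
  exact Finset.sum_congr rfl fun l _ => (mul_assoc _ _ _).symm

lemma coeff_fser_genPowSum (d : ℕ) (hd : 0 < d) (χ : DirichletCharacter ℂ d) (ξ : ℂ)
    (u w k : ℕ) (hw : 0 < w) :
    PowerSeries.coeff k (fser d χ ξ u (d * w))
      = (u : ℂ) ^ k / (k.factorial : ℂ) * genPowSum d χ (ξ ^ u) k (d * w - 1) := by
  have hdw : d * w - 1 + 1 = d * w := by have := Nat.mul_pos hd hw; omega
  rw [genPowSum, hdw, fser, map_sum, Finset.mul_sum]
  refine Finset.sum_congr rfl fun a _ => ?_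
  rw [PowerSeries.coeff_C_mul, PowerSeries.coeff_rescale, PowerSeries.coeff_exp]
  have halg : (algebraMap ℚ ℂ) (1 / (k.factorial : ℚ)) = 1 / (k.factorial : ℂ) := by
    rw [map_div₀, map_one, map_natCast]
  rw [halg, pow_mul]
  push_cast
  ring

lemma term_eq (n k l : ℕ) (S1 S2 S3 a b c : ℂ) :
    (n.factorial : ℂ) / ((k.factorial : ℂ) * (l.factorial : ℂ) *
        (((n - k - l).factorial : ℕ) : ℂ)) * S1 * S2 * S3 * a ^ k * b ^ l * c ^ (n - k - l)
      = (n.factorial : ℂ) * (a ^ k / (k.factorial : ℂ) * S1 *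
          (b ^ l / (l.factorial : ℂ) * S2) *
          (c ^ (n - k - l) / (((n - k - l).factorial : ℕ) : ℂ) * S3)) := by
  have h1 : (k.factorial : ℂ) ≠ 0 := Nat.cast_ne_zero.mpr k.factorial_ne_zero
  have h2 : (l.factorial : ℂ) ≠ 0 := Nat.cast_ne_zero.mpr l.factorial_ne_zero
  have h3 : (((n - k - l).factorial : ℕ) : ℂ) ≠ 0 :=
    Nat.cast_ne_zero.mpr (n - k - l).factorial_ne_zero
  field_simp

/-- Theorem 11 (type Λ₁₂¹, two symmetries in `w₁, w₂, w₃`). -/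
theorem stmt11 (d : ℕ) (hd : 0 < d) (χ : DirichletCharacter ℂ d) (hχ : χ.IsPrimitive)
    (ξ : ℂ) (hroot : ∃ m : ℕ, 0 < m ∧ ξ ^ m = 1)
    (n : ℕ) (w₁ w₂ w₃ : ℕ) (hw₁ : 0 < w₁) (hw₂ : 0 < w₂) (hw₃ : 0 < w₃)
    (h₂₃ : ξ ^ (d * (w₂ * w₃)) ≠ 1) (h₁₃ : ξ ^ (d * (w₁ * w₃)) ≠ 1)
    (h₁₂ : ξ ^ (d * (w₁ * w₂)) ≠ 1)
    (h₁ : ξ ^ (d * w₁) ≠ 1) (h₂ : ξ ^ (d * w₂) ≠ 1) (h₃ : ξ ^ (d * w₃) ≠ 1) :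
    ∑ k ∈ Finset.range (n + 1), ∑ l ∈ Finset.range (n + 1 - k),
        (n.factorial : ℂ) / ((k.factorial : ℂ) * (l.factorial : ℂ) *
            ((n - k - l).factorial : ℂ)) *
          genPowSum d χ (ξ ^ w₃) k (d * w₁ - 1) *
          genPowSum d χ (ξ ^ w₁) l (d * w₂ - 1) *
          genPowSum d χ (ξ ^ w₂) (n - k - l) (d * w₃ - 1) *
          (w₃ : ℂ) ^ k * (w₁ : ℂ) ^ l * (w₂ : ℂ) ^ (n - k - l)
      = ∑ k ∈ Finset.range (n + 1), ∑ l ∈ Finset.range (n + 1 - k),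
          (n.factorial : ℂ) / ((k.factorial : ℂ) * (l.factorial : ℂ) *
              ((n - k - l).factorial : ℂ)) *
            genPowSum d χ (ξ ^ w₂) k (d * w₁ - 1) *
            genPowSum d χ (ξ ^ w₁) l (d * w₃ - 1) *
            genPowSum d χ (ξ ^ w₃) (n - k - l) (d * w₂ - 1) *
            (w₂ : ℂ) ^ k * (w₁ : ℂ) ^ l * (w₃ : ℂ) ^ (n - k - l) := by
  calc
    _ = (n.factorial : ℂ) * PowerSeries.coeff n
          (fser d χ ξ w₃ (d * w₁) * fser d χ ξ w₁ (d * w₂) * fser d χ ξ w₂ (d * w₃)) := by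
        rw [coeff_mul3, Finset.mul_sum]
        refine Finset.sum_congr rfl fun k hk => ?_
        rw [Finset.mul_sum]
        refine Finset.sum_congr rfl fun l hl => ?_
        rw [coeff_fser_genPowSum d hd χ ξ w₃ w₁ k hw₁,
          coeff_fser_genPowSum d hd χ ξ w₁ w₂ l hw₂,
          coeff_fser_genPowSum d hd χ ξ w₂ w₃ (n - k - l) hw₃]
        exact term_eq n k l _ _ _ _ _ _
    _ = (n.factorial : ℂ) * PowerSeries.coeff n
          (fser d χ ξ w₂ (d * w₁) * fser d χ ξ w₁ (d * w₃) * fser d χ ξ w₃ (d * w₂)) := by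
        rw [key_prod d hd χ ξ w₁ w₂ w₃ h₁ h₂ h₃]
    _ = _ := by
        rw [coeff_mul3, Finset.mul_sum]
        refine Finset.sum_congr rfl fun k hk => ?_
        rw [Finset.mul_sum]
        refine Finset.sum_congr rfl fun l hl => ?_
        rw [coeff_fser_genPowSum d hd χ ξ w₂ w₁ k hw₁,
          coeff_fser_genPowSum d hd χ ξ w₁ w₃ l hw₃,
          coeff_fser_genPowSum d hd χ ξ w₃ w₂ (n - k - l) hw₂]
        exact (term_eq n k l _ _ _ _ _ _).symm
end

section
/- The n-th coefficient identity extracted from the two-variable quotient I(Γ¹): for all nonnegative integers n, y₁ ∈ ℂ, and positive integers w₁, w₂ with ξ^{d w₁ w₂} ≠ 1 (and ξ^{d w₁}, ξ^{d w₂} ≠ 1): Σ_{k=0}^{n} C(n,k) B_{k,χ,ξ^{w₁}}(w₂ y₁) S_{n−k}(d w₁ − 1; χ, ξ^{w₂}) w₁^{k} w₂^{n−k} = w₁^{n} Σ_{a=0}^{d w₁ − 1} χ(a) ξ^{a w₂} B_{n,χ,ξ^{w₁}}(w₂ y₁ + (w₂/w₁) a). -/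
open PowerSeries Finset

lemma genBern_add (d : ℕ) (χ : DirichletCharacter ℂ d) (ζ : ℂ) (n : ℕ) (x y : ℂ) :
    genBern d χ ζ n (x + y) =
      ∑ k ∈ Finset.range (n + 1), (n.choose k : ℂ) * genBern d χ ζ k x * y ^ (n - k) := by
  unfold genBern
  have key : (PowerSeries.X * PowerSeries.rescale (x + y) (PowerSeries.exp ℂ) * twistSum d χ ζ *
      (PowerSeries.C (ζ ^ d) * PowerSeries.rescale (d : ℂ) (PowerSeries.exp ℂ) - 1)⁻¹)
      = (PowerSeries.X * PowerSeries.rescale x (PowerSeries.exp ℂ) * twistSum d χ ζ *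
      (PowerSeries.C (ζ ^ d) * PowerSeries.rescale (d : ℂ) (PowerSeries.exp ℂ) - 1)⁻¹)
        * PowerSeries.rescale y (PowerSeries.exp ℂ) := by
    rw [← exp_mul_exp_eq_exp_add]
    ring
  rw [key, PowerSeries.coeff_mul, Finset.Nat.sum_antidiagonal_eq_sum_range_succ_mk, mul_sum]
  refine Finset.sum_congr rfl fun k hk => ?_
  have hkn : k ≤ n := Nat.lt_succ_iff.mp (Finset.mem_range.mp hk)
  rw [PowerSeries.coeff_rescale, PowerSeries.coeff_exp]
  have hfact : (n.factorial : ℂ) = (n.choose k : ℂ) * k.factorial * (n - k).factorial := by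
    exact_mod_cast (Nat.choose_mul_factorial_mul_factorial hkn).symm
  rw [hfact]
  simp only [one_div, map_inv₀, map_natCast]
  have h1 : ((n - k).factorial : ℂ) ≠ 0 := Nat.cast_ne_zero.mpr (Nat.factorial_ne_zero _)
  field_simp


/-- the two expansions (23) and (24) of the quotient `I(Γ¹)` coincide. -/
theorem stmt15 (d : ℕ) (hd : 0 < d) (χ : DirichletCharacter ℂ d) (hχ : χ.IsPrimitive)
    (ξ : ℂ) (hroot : ∃ m : ℕ, 0 < m ∧ ξ ^ m = 1)
    (n : ℕ) (w₁ w₂ : ℕ) (hw₁ : 0 < w₁) (hw₂ : 0 < w₂)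
    (h₁₂ : ξ ^ (d * (w₁ * w₂)) ≠ 1) (h₁ : ξ ^ (d * w₁) ≠ 1) (h₂ : ξ ^ (d * w₂) ≠ 1)
    (y₁ : ℂ) :
    ∑ k ∈ Finset.range (n + 1), (n.choose k : ℂ) *
        genBern d χ (ξ ^ w₁) k (w₂ * y₁) * genPowSum d χ (ξ ^ w₂) (n - k) (d * w₁ - 1) *
        (w₁ : ℂ) ^ k * (w₂ : ℂ) ^ (n - k)
      = (w₁ : ℂ) ^ n * ∑ a ∈ Finset.range (d * w₁), χ (a : ZMod d) * ξ ^ (a * w₂) *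
          genBern d χ (ξ ^ w₁) n ((w₂ : ℂ) * y₁ + (w₂ : ℂ) / (w₁ : ℂ) * a) := by
  have hw₁' : (w₁ : ℂ) ≠ 0 := Nat.cast_ne_zero.mpr hw₁.ne'
  have hdw : d * w₁ - 1 + 1 = d * w₁ := Nat.succ_pred_eq_of_pos (Nat.mul_pos hd hw₁)
  simp_rw [genBern_add]
  simp_rw [Finset.mul_sum]
  rw [Finset.sum_comm (s := Finset.range (d * w₁)) (t := Finset.range (n + 1))]
  refine Finset.sum_congr rfl fun k hk => ?_
  have hkn : k ≤ n := Nat.lt_succ_iff.mp (Finset.mem_range.mp hk)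
  unfold genPowSum
  rw [hdw]
  rw [Finset.mul_sum, Finset.sum_mul, Finset.sum_mul]
  refine Finset.sum_congr rfl fun a ha => ?_
  have hξ : ξ ^ (a * w₂) = (ξ ^ w₂) ^ a := by rw [mul_comm, pow_mul]
  have hpow : (w₁ : ℂ) ^ n = (w₁ : ℂ) ^ k * (w₁ : ℂ) ^ (n - k) := by
    rw [← pow_add, Nat.add_sub_cancel' hkn]
  have hcomb : (w₁ : ℂ) ^ (n - k) * ((w₂ : ℂ) / (w₁ : ℂ) * a) ^ (n - k)
      = (w₂ : ℂ) ^ (n - k) * (a : ℂ) ^ (n - k) := by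
    rw [← mul_pow, ← mul_pow]
    congr 1
    field_simp
  rw [hξ, hpow]
  have hinv : (w₁ : ℂ) ^ (n - k) * ((w₁ : ℂ)⁻¹) ^ (n - k) = 1 := by
    rw [← mul_pow, mul_inv_cancel₀ hw₁', one_pow]
  field_simp
  linear_combination (χ (a : ZMod d) * (ξ ^ w₂) ^ a * (n.choose k : ℂ) *
      genBern d χ (ξ ^ w₁) k ((w₂ : ℂ) * y₁) * (w₁ : ℂ) ^ k) * hcomb -
    ((n.choose k : ℂ) * genBern d χ (ξ ^ w₁) k ((w₂ : ℂ) * y₁) * χ (a : ZMod d) *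
      ξ ^ (w₂ * a) * (a : ℂ) ^ (n - k) * (w₁ : ℂ) ^ k * (w₂ : ℂ) ^ (n - k)) * hinv -
    ((n.choose k : ℂ) * genBern d χ (ξ ^ w₁) k ((w₂ : ℂ) * y₁) * χ (a : ZMod d) *
      ξ ^ (w₂ * a) * (a : ℂ) ^ (n - k) * (w₂ : ℂ) ^ (n - k)) * hinv
end
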